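/- arXiv:2303.11925 — 2 statements merged into one kernel-verified Lean document; each statement's English description precedes it below -/
import Mathlib

section
/- Let I ⊆ ℝ be an open interval, let f : I → ℝ be continuous and bounded from below, and let g be a continuous real-valued function defined on the image of f. If f'' ≤ g(f) holds in the viscosity sense on I, then f'' ≤ g(f) holds in the sense of distributions on I, i.e. ∫_I f(x) φ''(x) dx ≤ ∫_I g(f(x)) φ(x) dx for every nonnegative C^∞ function φ with compact support contained in I. -/
open Filter Set MeasureTheory
open scoped Topology

private lemma quad_contDiff (C0 C1 C2 : ℝ) :
    ContDiff ℝ (⊤ : ℕ∞) (fun t : ℝ => C0 + C1*t + C2*t^2) := by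
  exact (contDiff_const.add (contDiff_const.mul contDiff_id)).add
    (contDiff_const.mul (contDiff_id.pow 2))

private lemma quad_hasDeriv (C0 C1 C2 t : ℝ) :
    HasDerivAt (fun t : ℝ => C0 + C1*t + C2*t^2) (C1 + C2*(2*t)) t := by
  have h1 : HasDerivAt (fun s : ℝ => s) 1 t := hasDerivAt_id t
  have h2 : HasDerivAt (fun s : ℝ => s^2) (2*t) t := by
    simpa using hasDerivAt_pow 2 t
  exact (((hasDerivAt_const t C0).add (h1.const_mul C1)).add (h2.const_mul C2)).congr_deriv (by ring)

private lemma quad_deriv2 (C0 C1 C2 x : ℝ) :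
    deriv (deriv (fun t : ℝ => C0 + C1*t + C2*t^2)) x = 2*C2 := by
  have h : deriv (fun t : ℝ => C0 + C1*t + C2*t^2) = fun t => C1 + C2*(2*t) := by
    funext t; exact (quad_hasDeriv C0 C1 C2 t).deriv
  rw [h]
  have h2 : HasDerivAt (fun t : ℝ => C1 + C2*(2*t)) (2*C2) x := by
    have : HasDerivAt (fun t : ℝ => 2*t) 2 x := by
      simpa using (hasDerivAt_id x).const_mul (2:ℝ)
    simpa [mul_comm] using (this.const_mul C2).const_add C1
  exact h2.deriv

private lemma visc_concave (f : ℝ → ℝ) (M A B : ℝ) (hf : ContinuousOn f (Set.Ioo A B))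
    (hv : ∀ x ∈ Set.Ioo A B, ∀ C0 C1 C2 : ℝ,
      IsLocalMax (fun y => (C0 + C1*y + C2*y^2) - f y) x → 2*C2 ≤ M) :
    ConcaveOn ℝ (Set.Ioo A B) (fun x => f x - M * x^2 / 2) := by
  set u : ℝ → ℝ := fun x => f x - M * x^2 / 2 with hu
  apply LinearOrder.concaveOn_of_lt (convex_Ioo A B)
  intro p hp q hq hpq a b ha hb hab
  by_contra hcon
  rw [not_le] at hcon
  simp only [smul_eq_mul] at hcon
  obtain rfl : a = 1 - b := by linarith
  have hb1 : b < 1 := by linarith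
  have hqp : 0 < q - p := sub_pos.2 hpq
  set c : ℝ := (1-b)*p + b*q with hcdef
  have hc1 : p < c := by nlinarith
  have hc2 : c < q := by nlinarith
  set ε : ℝ := (1-b) * u p + b * u q - u c with hε
  have hεpos : 0 < ε := by simp only [hε]; linarith
  set η : ℝ := ε / (2*(1-b)*b*(q-p)^2) with hη
  have hηpos : 0 < η := by
    apply div_pos hεpos; positivity
  set s : ℝ := (u q - u p)/(q-p) with hs
  set w : ℝ → ℝ := fun t => (u p + s*(t-p) + η*(t-p)*(t-q)) - u t with hw
  have hIccsub : Set.Icc p q ⊆ Set.Ioo A B := Set.Icc_subset_Ioo hp.1 hq.2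
  have hucont : ContinuousOn u (Set.Ioo A B) := by
    apply hf.sub; fun_prop
  have hwcont : ContinuousOn w (Set.Icc p q) := by
    apply ContinuousOn.sub
    · fun_prop
    · exact hucont.mono hIccsub
  obtain ⟨x₀, hx₀mem, hx₀max⟩ :=
    isCompact_Icc.exists_isMaxOn (Set.nonempty_Icc.2 hpq.le) hwcont
  have hwp : w p = 0 := by simp [hw]
  have hwq : w q = 0 := by
    simp only [hw, hs]
    field_simp
    ring
  have hwc : w c = ε/2 := by
    have h1 : c - p = b*(q-p) := by rw [hcdef]; ring
    have h2 : c - q = -((1-b)*(q-p)) := by rw [hcdef]; ring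
    have hsq : s * (c - p) = b * (u q - u p) := by
      rw [h1, hs]; field_simp
    have hηq : η*(c-p)*(c-q) = -(ε/2) := by
      rw [h1, h2, hη]; field_simp
    have : w c = u p + s*(c-p) + η*(c-p)*(c-q) - u c := by simp [hw]
    rw [this, hsq, hηq, hε]; ring
  have hcmem : c ∈ Set.Icc p q := ⟨hc1.le, hc2.le⟩
  have hwx₀ : ε/2 ≤ w x₀ := by
    rw [← hwc]; exact hx₀max hcmem
  have hx₀Ioo : x₀ ∈ Set.Ioo p q := by
    rcases hx₀mem.1.lt_or_eq with h | h
    · rcases hx₀mem.2.lt_or_eq with h' | h'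
      · exact ⟨h, h'⟩
      · exfalso; rw [h'] at hwx₀; rw [hwq] at hwx₀; linarith
    · exfalso; rw [← h] at hwx₀; rw [hwp] at hwx₀; linarith
  have hmax : IsLocalMax w x₀ := by
    filter_upwards [Ioo_mem_nhds hx₀Ioo.1 hx₀Ioo.2] with y hy
    exact hx₀max (Set.Ioo_subset_Icc_self hy)
  set C0 : ℝ := u p - s*p + η*p*q with hC0
  set C1 : ℝ := s - η*(p+q) + M*0 with hC1
  set C2 : ℝ := η + M/2 with hC2
  have hweq : w = fun y => (C0 + C1*y + C2*y^2) - f y := by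
    funext t; simp only [hw, hu, hC0, hC1, hC2]; ring
  have hfin := hv x₀ (hIccsub (Set.Ioo_subset_Icc_self hx₀Ioo)) C0 C1 C2 (hweq ▸ hmax)
  rw [hC2] at hfin
  linarith

private lemma visc_secondDiff_le (f : ℝ → ℝ) (M A B : ℝ) (hf : ContinuousOn f (Set.Ioo A B))
    (hv : ∀ x ∈ Set.Ioo A B, ∀ C0 C1 C2 : ℝ,
      IsLocalMax (fun y => (C0 + C1*y + C2*y^2) - f y) x → 2*C2 ≤ M)
    (x h : ℝ) (hh : 0 < h) (h1 : A < x - h) (h2 : x + h < B) :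
    f (x+h) + f (x-h) - 2*f x ≤ M * h^2 := by
  have hcc := visc_concave f M A B hf hv
  have m1 : x - h ∈ Set.Ioo A B := ⟨h1, by linarith⟩
  have m2 : x + h ∈ Set.Ioo A B := ⟨by linarith, h2⟩
  have key := hcc.2 m1 m2 (by norm_num : (0:ℝ) ≤ 1/2) (by norm_num : (0:ℝ) ≤ 1/2)
    (by norm_num)
  simp only [smul_eq_mul] at key
  have hmid : (1/2:ℝ)*(x-h) + (1/2:ℝ)*(x+h) = x := by ring
  rw [hmid] at key
  nlinarith [key]

private lemma bdd_of_cs {ψ : ℝ → ℝ} (hc : Continuous ψ) (hs : HasCompactSupport ψ) :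
    ∃ C : ℝ, 0 ≤ C ∧ ∀ x, ‖ψ x‖ ≤ C := by
  obtain ⟨C, hC⟩ := hs.exists_bound_of_continuousOn hc.continuousOn
  refine ⟨max C 0, le_max_right _ _, fun x => ?_⟩
  by_cases hx : x ∈ tsupport ψ
  · exact (hC x hx).trans (le_max_left _ _)
  · rw [image_eq_zero_of_notMem_tsupport hx]
    simpa using le_max_right C 0

theorem stmt_2 (I : Set ℝ) (hIopen : IsOpen I) (hIconn : I.OrdConnected)
    (f g : ℝ → ℝ) (hf : ContinuousOn f I) (hg : ContinuousOn g (f '' I))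
    (hbdd : BddBelow (f '' I))
    -- `f'' ≤ g(f)` in the viscosity sense on `I`
    (hvisc : ∀ x ∈ I, ∀ φ : ℝ → ℝ, ∀ U ∈ nhds x, ContDiffOn ℝ (⊤ : ℕ∞) φ U →
      IsLocalMax (fun y => φ y - f y) x → deriv (deriv φ) x ≤ g (f x)) :
    -- `f'' ≤ g(f)` in the sense of distributions on `I`
    ∀ φ : ℝ → ℝ, ContDiff ℝ (⊤ : ℕ∞) φ → HasCompactSupport φ → tsupport φ ⊆ I →
      (∀ x, 0 ≤ φ x) →
      ∫ x in I, f x * deriv (deriv φ) x ≤ ∫ x in I, g (f x) * φ x := by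
  intro φ hφ hφcs hφI hφ0
  have hφT : ContDiff ℝ ((⊤:ℕ∞) : WithTop ℕ∞) φ := hφ.of_le (by simp)
  have hφdiff : Differentiable ℝ φ := hφT.differentiable (by simp)
  have hφ'cd : ContDiff ℝ ((⊤:ℕ∞) : WithTop ℕ∞) (deriv φ) := (contDiff_infty_iff_deriv.mp hφT).2
  have hφ'diff : Differentiable ℝ (deriv φ) := hφ'cd.differentiable (by simp)
  have hφ''cont : Continuous (deriv (deriv φ)) := hφ'cd.continuous_deriv (by exact_mod_cast le_top)
  have hφ'cs : HasCompactSupport (deriv φ) := hφcs.deriv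
  have hφ''cs : HasCompactSupport (deriv (deriv φ)) := hφ'cs.deriv
  have ht1 : tsupport (deriv φ) ⊆ tsupport φ :=
    closure_minimal support_deriv_subset isClosed_closure
  have ht2 : tsupport (deriv (deriv φ)) ⊆ tsupport φ :=
    (closure_minimal support_deriv_subset isClosed_closure).trans ht1
  rcases Set.eq_empty_or_nonempty (tsupport φ) with hK0 | hKne
  · have hz : ∀ x, φ x = 0 := fun x =>
      image_eq_zero_of_notMem_tsupport (by simp [hK0])
    have hz'' : ∀ x, deriv (deriv φ) x = 0 := fun x =>
      image_eq_zero_of_notMem_tsupport (fun hx => by rw [hK0] at ht2; exact ht2 hx)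
    simp [hz, hz'']
  -- basic geometry of the support
  have hKc : IsCompact (tsupport φ) := hφcs
  set a₀ := sInf (tsupport φ) with ha₀def
  set b₀ := sSup (tsupport φ) with hb₀def
  have ha₀K : a₀ ∈ tsupport φ := hKc.sInf_mem hKne
  have hb₀K : b₀ ∈ tsupport φ := hKc.sSup_mem hKne
  have hKsub : tsupport φ ⊆ Set.Icc a₀ b₀ := fun x hx =>
    ⟨csInf_le hKc.bddBelow hx, le_csSup hKc.bddAbove hx⟩
  have hab : a₀ ≤ b₀ := (hKsub ha₀K).2
  obtain ⟨δ, hδpos, hδsub⟩ := hKc.exists_thickening_subset_open hIopen hφI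
  set ε := δ/2 with hεdef
  have hεpos : 0 < ε := by positivity
  have hεδ : ε < δ := by simp only [hεdef]; linarith
  have hIccI : Set.Icc a₀ b₀ ⊆ I := hIconn.out (hφI ha₀K) (hφI hb₀K)
  have hCsub : Set.Icc (a₀-ε) (b₀+ε) ⊆ I := by
    intro x hx
    rcases lt_or_ge x a₀ with h | h
    · apply hδsub
      rw [Metric.mem_thickening_iff]
      refine ⟨a₀, ha₀K, ?_⟩
      rw [Real.dist_eq, abs_of_nonpos (by linarith)]
      have := hx.1; linarith
    rcases le_or_gt x b₀ with h' | h'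
    · exact hIccI ⟨h, h'⟩
    · apply hδsub
      rw [Metric.mem_thickening_iff]
      refine ⟨b₀, hb₀K, ?_⟩
      rw [Real.dist_eq, abs_of_nonneg (by linarith)]
      have := hx.2; linarith
  set a₁ := a₀ - ε/2 with ha₁def
  set b₁ := b₀ + ε/2 with hb₁def
  have ha₁b₁ : a₁ ≤ b₁ := by simp only [ha₁def, hb₁def]; linarith
  have hIcc₁C : Set.Icc a₁ b₁ ⊆ Set.Icc (a₀-ε) (b₀+ε) := by
    apply Set.Icc_subset_Icc <;> simp only [ha₁def, hb₁def] <;> linarith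
  have hIcc₁I : Set.Icc a₁ b₁ ⊆ I := hIcc₁C.trans hCsub
  have hKIcc₁ : tsupport φ ⊆ Set.Icc a₁ b₁ :=
    hKsub.trans (Set.Icc_subset_Icc (by simp only [ha₁def]; linarith)
      (by simp only [hb₁def]; linarith))
  set clamp : ℝ → ℝ := fun x => max a₁ (min b₁ x) with hclampdef
  have hclampmem : ∀ x, clamp x ∈ Set.Icc a₁ b₁ := fun x =>
    ⟨le_max_left _ _, max_le ha₁b₁ (min_le_left _ _)⟩
  have hclampcont : Continuous clamp := continuous_const.max (continuous_const.min continuous_id)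
  have hclampeq : ∀ x ∈ Set.Icc a₁ b₁, clamp x = x := by
    intro x hx
    simp only [hclampdef]
    rw [min_eq_right hx.2, max_eq_right hx.1]
  set F : ℝ → ℝ := fun x => f (clamp x) with hFdef
  have hFcont : Continuous F :=
    hf.comp_continuous hclampcont (fun x => hIcc₁I (hclampmem x))
  have hFeq : ∀ x ∈ Set.Icc a₁ b₁, F x = f x := fun x hx => by
    simp only [hFdef, hclampeq x hx]
  set G : ℝ → ℝ := fun x => g (F x) with hGdef
  have hGcont : Continuous G :=
    hg.comp_continuous hFcont (fun x => ⟨clamp x, hIcc₁I (hclampmem x), rfl⟩)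
  obtain ⟨CF, hCF⟩ := (isCompact_Icc : IsCompact (Set.Icc a₁ b₁)).exists_bound_of_continuousOn
    (hf.mono hIcc₁I)
  have hFbdd : ∀ x, ‖F x‖ ≤ CF := fun x => hCF _ (hclampmem x)
  obtain ⟨L, hL0, hL⟩ := bdd_of_cs hφ''cont hφ''cs
  have hLip : LipschitzWith L.toNNReal (deriv φ) := by
    apply lipschitzWith_of_nnnorm_deriv_le hφ'diff
    intro x
    rw [← NNReal.coe_le_coe, coe_nnnorm, Real.coe_toNNReal L hL0]
    exact hL x
  -- derivative of the symmetric sum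
  have hψd : ∀ x t : ℝ, HasDerivAt (fun t => φ (x+t) + φ (x-t))
      (deriv φ (x+t) - deriv φ (x-t)) t := by
    intro x t
    have h1 : HasDerivAt (fun t : ℝ => φ (x+t)) (deriv φ (x+t) * 1) t :=
      (hφdiff (x+t)).hasDerivAt.comp t ((hasDerivAt_id t).const_add x)
    have h2 : HasDerivAt (fun t : ℝ => φ (x-t)) (deriv φ (x-t) * (-1)) t :=
      (hφdiff (x-t)).hasDerivAt.comp t ((hasDerivAt_id t).const_sub x)
    have h3 := h1.add h2
    exact h3.congr_deriv (by ring)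
  -- uniform second-difference bound
  have hnum : ∀ x h : ℝ, 0 ≤ h → |φ (x+h) + φ (x-h) - 2*φ x| ≤ L * h^2 := by
    intro x h hh
    have hφc : Continuous φ := hφ.continuous
    have hφ'c : Continuous (deriv φ) := hφ'cd.continuous
    have hcont' : Continuous (fun t => deriv φ (x+t) - deriv φ (x-t)) := by fun_prop
    have hint : IntervalIntegrable (fun t => deriv φ (x+t) - deriv φ (x-t)) volume 0 h :=
      hcont'.intervalIntegrable 0 h
    have heq : φ (x+h) + φ (x-h) - 2*φ x
        = ∫ t in (0:ℝ)..h, (deriv φ (x+t) - deriv φ (x-t)) := by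
      rw [intervalIntegral.integral_eq_sub_of_hasDerivAt (fun t _ => hψd x t) hint]
      simp
      ring
    rw [heq]
    have hbound : ∀ t ∈ Set.Icc (0:ℝ) h, |deriv φ (x+t) - deriv φ (x-t)| ≤ L * (2*t) := by
      intro t ht
      have hd := hLip.dist_le_mul (x+t) (x-t)
      rw [Real.dist_eq, Real.dist_eq, Real.coe_toNNReal L hL0] at hd
      calc |deriv φ (x+t) - deriv φ (x-t)| ≤ L * |x+t - (x-t)| := hd
        _ = L * (2*t) := by
            rw [show x+t-(x-t) = 2*t by ring, abs_of_nonneg (by linarith [ht.1])]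
    calc |∫ t in (0:ℝ)..h, (deriv φ (x+t) - deriv φ (x-t))|
        ≤ ∫ t in (0:ℝ)..h, |deriv φ (x+t) - deriv φ (x-t)| :=
          intervalIntegral.abs_integral_le_integral_abs hh
      _ ≤ ∫ t in (0:ℝ)..h, L * (2*t) := by
          apply intervalIntegral.integral_mono_on hh (hcont'.abs.intervalIntegrable 0 h)
            (by apply Continuous.intervalIntegrable; fun_prop)
          exact hbound
      _ = L * h^2 := by
          rw [intervalIntegral.integral_const_mul, intervalIntegral.integral_const_mul,
            integral_id]
          ring
  -- pointwise convergence of second difference quotients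
  have hael : ∀ x : ℝ, Tendsto (fun h : ℝ => F x * ((φ (x+h) + φ (x-h) - 2*φ x)/h^2))
      (𝓝[>] (0:ℝ)) (𝓝 (F x * deriv (deriv φ) x)) := by
    intro x
    apply Tendsto.const_mul
    apply HasDerivAt.lhopital_zero_nhdsGT
      (f' := fun h => deriv φ (x+h) - deriv φ (x-h)) (g' := fun h => 2*h)
    · apply Eventually.of_forall
      intro t
      exact (hψd x t).sub_const (2*φ x)
    · apply Eventually.of_forall
      intro t
      simpa using hasDerivAt_pow 2 t
    · filter_upwards [self_mem_nhdsWithin] with t ht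
      have : (0:ℝ) < t := ht
      positivity
    · have hc : Continuous (fun h : ℝ => φ (x+h) + φ (x-h) - 2*φ x) := by
        have := hφ.continuous
        fun_prop
      have h0 : Tendsto (fun h : ℝ => φ (x+h) + φ (x-h) - 2*φ x) (𝓝 0) (𝓝 0) := by
        have h00 : φ x + φ x - 2*φ x = 0 := by ring
        have hc0 := hc.tendsto 0
        simp only [add_zero, sub_zero] at hc0
        rwa [h00] at hc0
      exact h0.mono_left nhdsWithin_le_nhds
    · have : Tendsto (fun h : ℝ => h^2) (𝓝 0) (𝓝 0) := by
        simpa using (continuous_pow 2).tendsto (0:ℝ)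
      exact this.mono_left nhdsWithin_le_nhds
    · -- (deriv φ (x+h) - deriv φ (x-h))/(2h) → deriv (deriv φ) x
      have hd : HasDerivAt (deriv φ) (deriv (deriv φ) x) x := (hφ'diff x).hasDerivAt
      have T1 : Tendsto (fun h : ℝ => (deriv φ (x+h) - deriv φ x)/h) (𝓝[≠] (0:ℝ))
          (𝓝 (deriv (deriv φ) x)) := by
        have hT := hasDerivAt_iff_tendsto_slope_zero.mp hd
        refine hT.congr fun h => ?_
        simp only [smul_eq_mul]
        ring
      have hneg : Tendsto (fun h : ℝ => -h) (𝓝[≠] (0:ℝ)) (𝓝[≠] (0:ℝ)) := by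
        apply tendsto_nhdsWithin_of_tendsto_nhds_of_eventually_within
        · have : Tendsto (fun h : ℝ => -h) (𝓝 0) (𝓝 0) := by
            simpa using continuous_neg.tendsto (0:ℝ)
          exact this.mono_left nhdsWithin_le_nhds
        · filter_upwards [self_mem_nhdsWithin] with h hh
          simp only [Set.mem_compl_iff, Set.mem_singleton_iff] at hh ⊢
          simpa using hh
      have T2 : Tendsto (fun h : ℝ => (deriv φ x - deriv φ (x-h))/h) (𝓝[≠] (0:ℝ))
          (𝓝 (deriv (deriv φ) x)) := by
        have hT := T1.comp hneg
        refine hT.congr fun h => ?_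
        simp only [Function.comp]
        rw [show x + -h = x - h by ring, div_neg]
        ring
      have Tsum : Tendsto (fun h : ℝ =>
          ((deriv φ (x+h) - deriv φ x)/h + (deriv φ x - deriv φ (x-h))/h)/2)
          (𝓝[≠] (0:ℝ)) (𝓝 (deriv (deriv φ) x)) := by
        have hT := (T1.add T2).div_const 2
        convert hT using 2
        ring
      have Tsum' := Tsum.mono_left
        (nhdsWithin_mono (0:ℝ) (fun h (hh : h ∈ Set.Ioi (0:ℝ)) => ne_of_gt hh))
      apply Tsum'.congr'
      filter_upwards [self_mem_nhdsWithin] with h hh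
      ring
  -- conversions between set integrals and global integrals
  have hconv1 : ∫ x in I, f x * deriv (deriv φ) x = ∫ x, F x * deriv (deriv φ) x := by
    rw [setIntegral_congr_fun hIopen.measurableSet
      (g := fun x => F x * deriv (deriv φ) x) ?_]
    · apply setIntegral_eq_integral_of_forall_compl_eq_zero
      intro x hx
      have hxK : x ∉ tsupport φ := fun h => hx (hφI h)
      have : deriv (deriv φ) x = 0 :=
        image_eq_zero_of_notMem_tsupport (fun h => hxK (ht2 h))
      rw [this, mul_zero]
    · intro x _
      by_cases hx : x ∈ tsupport φ
      · simp only [hFeq x (hKIcc₁ hx)]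
      · have : deriv (deriv φ) x = 0 :=
          image_eq_zero_of_notMem_tsupport (fun h => hx (ht2 h))
        simp [this]
  have hconv2 : ∫ x in I, g (f x) * φ x = ∫ x, G x * φ x := by
    rw [setIntegral_congr_fun hIopen.measurableSet (g := fun x => G x * φ x) ?_]
    · apply setIntegral_eq_integral_of_forall_compl_eq_zero
      intro x hx
      have hxK : x ∉ tsupport φ := fun h => hx (hφI h)
      rw [image_eq_zero_of_notMem_tsupport hxK, mul_zero]
    · intro x _
      by_cases hx : x ∈ tsupport φ
      · have hFx : F x = f x := hFeq x (hKIcc₁ hx)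
        simp only [hGdef, hFx]
      · simp only [image_eq_zero_of_notMem_tsupport hx, mul_zero]
  rw [hconv1, hconv2]
  -- integrability helpers
  have hφc : Continuous φ := hφ.continuous
  have intCS : ∀ ψ : ℝ → ℝ, Continuous ψ → Integrable (fun x => ψ x * φ x) := by
    intro ψ hψ
    exact (hψ.mul hφc).integrable_of_hasCompactSupport hφcs.mul_left
  have hφint : Integrable φ := hφc.integrable_of_hasCompactSupport hφcs
  have hGφint : Integrable (fun x => G x * φ x) := intCS G hGcont
  -- main estimate for each ε'
  have hmain : ∀ ε' : ℝ, 0 < ε' →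
      (∫ x, F x * deriv (deriv φ) x) ≤ (∫ x, G x * φ x) + ε' * ∫ x, φ x := by
    intro ε' hε'
    obtain ⟨r₀, hr₀pos, hr₀⟩ := Metric.uniformContinuousOn_iff.mp
      ((isCompact_Icc : IsCompact (Set.Icc (a₀-ε) (b₀+ε))).uniformContinuousOn_of_continuous
        hGcont.continuousOn) ε' hε'
    set r := min r₀ (ε/4) with hrdef
    have hrpos : 0 < r := lt_min hr₀pos (by positivity)
    have hrε : r ≤ ε/4 := min_le_right _ _
    have hkey : ∀ x ∈ tsupport φ, ∀ h : ℝ, 0 < h → h < r →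
        F (x-h) + F (x+h) - 2*F x ≤ (G x + ε') * h^2 := by
      intro x hx h hh hhr
      have hx₀ : x ∈ Set.Icc a₀ b₀ := hKsub hx
      have hJsub : Set.Ioo (x-r) (x+r) ⊆ Set.Icc a₁ b₁ := by
        intro y hy
        constructor
        · simp only [ha₁def]; have := hy.1; have := hx₀.1; linarith
        · simp only [hb₁def]; have := hy.2; have := hx₀.2; linarith
      have hxC : x ∈ Set.Icc (a₀-ε) (b₀+ε) := ⟨by linarith [hx₀.1], by linarith [hx₀.2]⟩
      have hvloc : ∀ y ∈ Set.Ioo (x-r) (x+r), ∀ C0 C1 C2 : ℝ,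
          IsLocalMax (fun z => (C0 + C1*z + C2*z^2) - f z) y → 2*C2 ≤ G x + ε' := by
        intro y hy C0 C1 C2 hm
        have hy₁ : y ∈ Set.Icc a₁ b₁ := hJsub hy
        have hyI : y ∈ I := hIcc₁I hy₁
        have h1 := hvisc y hyI _ Set.univ Filter.univ_mem
          (quad_contDiff C0 C1 C2).contDiffOn hm
        rw [quad_deriv2] at h1
        have h2 : g (f y) = G y := by
          simp only [hGdef]
          rw [hFeq y hy₁]
        have hyC : y ∈ Set.Icc (a₀-ε) (b₀+ε) := hIcc₁C hy₁
        have h3 : dist (G y) (G x) < ε' := by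
          apply hr₀ y hyC x hxC
          rw [Real.dist_eq]
          have h4 : |y - x| < r := by
            rw [abs_lt]
            constructor
            · linarith [hy.1]
            · linarith [hy.2]
          exact lt_of_lt_of_le h4 (min_le_left _ _)
        have h5 : G y < G x + ε' := by
          rw [Real.dist_eq] at h3
          have := abs_lt.mp h3
          linarith [this.1, this.2]
        rw [h2] at h1
        linarith
      have hm := visc_secondDiff_le f (G x + ε') (x-r) (x+r)
        (hf.mono ((Set.Ioo_subset_Icc_self.trans ?_).trans hIcc₁I)) hvloc x h hh
        (by linarith) (by linarith)
      · have e1 : F (x+h) = f (x+h) := hFeq _ (hJsub ⟨by linarith, by linarith⟩)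
        have e2 : F (x-h) = f (x-h) := hFeq _ (hJsub ⟨by linarith, by linarith⟩)
        have e3 : F x = f x := hFeq _ (hJsub ⟨by linarith, by linarith⟩)
        rw [e1, e2, e3]
        linarith
      · -- Icc (x-r) (x+r) ⊆ Icc a₁ b₁ : strengthen hJsub
        intro y hy
        constructor
        · simp only [ha₁def]; have := hy.1; have := hx₀.1; linarith
        · simp only [hb₁def]; have := hy.2; have := hx₀.2; linarith
    -- dominated convergence
    have hbound_int : Integrable ((Set.Icc (a₀-1) (b₀+1)).indicator (fun _ => CF * L)) := by
      rw [integrable_indicator_iff measurableSet_Icc]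
      exact integrableOn_const measure_Icc_lt_top.ne
    have hDCT : Tendsto (fun h : ℝ => ∫ x, F x * ((φ (x+h) + φ (x-h) - 2*φ x)/h^2))
        (𝓝[>] (0:ℝ)) (𝓝 (∫ x, F x * deriv (deriv φ) x)) := by
      apply tendsto_integral_filter_of_dominated_convergence _ ?_ ?_ hbound_int
        (Eventually.of_forall hael)
      · apply Eventually.of_forall
        intro h
        apply Continuous.aestronglyMeasurable
        fun_prop
      · filter_upwards [Ioo_mem_nhdsGT_of_mem (Set.left_mem_Ico.2 zero_lt_one)] with h hh
        apply Eventually.of_forall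
        intro x
        by_cases hx : x ∈ Set.Icc (a₀-1) (b₀+1)
        · rw [Set.indicator_of_mem hx]
          rw [norm_mul]
          have hb2 : ‖(φ (x+h) + φ (x-h) - 2*φ x)/h^2‖ ≤ L := by
            have h2 : (0:ℝ) < h^2 := by have := hh.1; positivity
            rw [Real.norm_eq_abs, abs_div, abs_of_pos h2, div_le_iff₀ h2]
            exact hnum x h hh.1.le
          exact mul_le_mul (hFbdd x) hb2 (norm_nonneg _)
            ((norm_nonneg (F x)).trans (hFbdd x))
        · rw [Set.indicator_of_notMem hx]
          have hnot : ∀ y : ℝ, y ∉ Set.Icc a₀ b₀ → φ y = 0 := fun y hy =>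
            image_eq_zero_of_notMem_tsupport (fun hc => hy (hKsub hc))
          have hx' : x < a₀ - 1 ∨ b₀ + 1 < x := by
            by_contra hcc
            push_neg at hcc
            exact hx ⟨hcc.1, hcc.2⟩
          have hz1 : φ (x+h) = 0 := by
            apply hnot
            intro hmem
            rcases hx' with h' | h'
            · have := hmem.1; have := hh.2; linarith
            · have := hmem.2; have := hh.1; linarith
          have hz2 : φ (x-h) = 0 := by
            apply hnot
            intro hmem
            rcases hx' with h' | h'
            · have := hmem.1; have := hh.1; linarith
            · have := hmem.2; have := hh.2; linarith
          have hz3 : φ x = 0 := by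
            apply hnot
            intro hmem
            rcases hx' with h' | h'
            · have := hmem.1; linarith
            · have := hmem.2; linarith
          simp [hz1, hz2, hz3]
    -- per-h inequality
    have hineq : ∀ᶠ h in 𝓝[>] (0:ℝ),
        (∫ x, F x * ((φ (x+h) + φ (x-h) - 2*φ x)/h^2))
          ≤ (∫ x, G x * φ x) + ε' * ∫ x, φ x := by
      filter_upwards [Ioo_mem_nhdsGT_of_mem (Set.left_mem_Ico.2 hrpos)] with h hh
      have hhpos : 0 < h := hh.1
      have hhr : h < r := hh.2
      have h2 : (0:ℝ) < h^2 := by positivity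
      have int1 : Integrable (fun x => F x * φ (x+h)) := by
        apply Continuous.integrable_of_hasCompactSupport
          (hFcont.mul (hφc.comp (continuous_add_right h)))
        have hcs : HasCompactSupport (fun x => φ (x+h)) :=
          hφcs.comp_isClosedEmbedding (Homeomorph.addRight h).isClosedEmbedding
        exact hcs.mul_left
      have int2 : Integrable (fun x => F x * φ (x-h)) := by
        apply Continuous.integrable_of_hasCompactSupport
          (hFcont.mul (hφc.comp (continuous_sub_right h)))
        have hcs : HasCompactSupport (fun x => φ (x-h)) :=
          hφcs.comp_isClosedEmbedding (Homeomorph.subRight h).isClosedEmbedding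
        exact hcs.mul_left
      have int3 : Integrable (fun x => F x * φ x) := intCS F hFcont
      have int1' : Integrable (fun x => F (x-h) * φ x) :=
        intCS _ (hFcont.comp (continuous_sub_right h))
      have int2' : Integrable (fun x => F (x+h) * φ x) :=
        intCS _ (hFcont.comp (continuous_add_right h))
      have intA : Integrable (fun x => (F (x-h) + F (x+h) - 2*F x) * φ x) := by
        have : (fun x => (F (x-h) + F (x+h) - 2*F x) * φ x)
            = fun x => F (x-h) * φ x + F (x+h) * φ x - 2*(F x * φ x) := by
          funext x; ring
        rw [this]
        exact (int1'.add int2').sub (int3.const_mul 2)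
      have intB : Integrable (fun x => ((G x + ε') * h^2) * φ x) :=
        intCS _ (by fun_prop)
      have e1 : (∫ x, F x * φ (x+h)) = ∫ x, F (x-h) * φ x := by
        have := integral_add_right_eq_self (μ := volume) (fun y => F (y-h) * φ y) h
        simpa using this
      have e2 : (∫ x, F x * φ (x-h)) = ∫ x, F (x+h) * φ x := by
        have := integral_sub_right_eq_self (μ := volume) (fun y => F (y+h) * φ y) h
        simpa using this
      have lhs_eq : (∫ x, F x * ((φ (x+h) + φ (x-h) - 2*φ x)/h^2))
          = (h^2)⁻¹ * ∫ x, (F (x-h) + F (x+h) - 2*F x) * φ x := by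
        have hre : (fun x => F x * ((φ (x+h) + φ (x-h) - 2*φ x)/h^2))
            = fun x => (h^2)⁻¹ * (F x * φ (x+h) + F x * φ (x-h) - 2*(F x * φ x)) := by
          funext x; ring
        have int12 : Integrable (fun x => F x * φ (x+h) + F x * φ (x-h)) := int1.add int2
        have int12' : Integrable (fun x => F (x-h) * φ x + F (x+h) * φ x) := int1'.add int2'
        have int3c : Integrable (fun x => 2*(F x * φ x)) := int3.const_mul 2
        have hre2 : (fun x => (F (x-h) + F (x+h) - 2*F x) * φ x)
            = fun x => (F (x-h) * φ x + F (x+h) * φ x) - 2*(F x * φ x) := by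
          funext x; ring
        rw [hre, integral_const_mul, integral_sub int12 int3c,
          integral_add int1 int2, integral_const_mul, e1, e2, hre2,
          integral_sub int12' int3c, integral_add int1' int2', integral_const_mul]
      have hmono : (∫ x, (F (x-h) + F (x+h) - 2*F x) * φ x)
          ≤ ∫ x, ((G x + ε') * h^2) * φ x := by
        apply integral_mono intA intB
        intro x
        show (F (x-h) + F (x+h) - 2*F x) * φ x ≤ ((G x + ε') * h^2) * φ x
        rcases (hφ0 x).eq_or_lt with h0 | h0
        · rcases em (φ x = 0) with hz | hz
          · rw [hz, mul_zero, mul_zero]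
          · exact absurd (by linarith [h0.le, hφ0 x] : φ x = 0) hz
        · have hxK : x ∈ tsupport φ := subset_closure (by simpa [Function.mem_support] using h0.ne')
          have := hkey x hxK h hhpos hhr
          exact mul_le_mul_of_nonneg_right this (hφ0 x)
      have rhs_eq : (∫ x, ((G x + ε') * h^2) * φ x)
          = h^2 * ∫ x, (G x + ε') * φ x := by
        have hre : (fun x => ((G x + ε') * h^2) * φ x)
            = fun x => h^2 * ((G x + ε') * φ x) := by
          funext x; ring
        rw [hre, integral_const_mul]
      have final_eq : (∫ x, (G x + ε') * φ x) = (∫ x, G x * φ x) + ε' * ∫ x, φ x := by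
        have hre : (fun x => (G x + ε') * φ x) = fun x => G x * φ x + ε' * φ x := by
          funext x; ring
        rw [hre, integral_add hGφint (hφint.const_mul ε'), integral_const_mul]
      calc (∫ x, F x * ((φ (x+h) + φ (x-h) - 2*φ x)/h^2))
          = (h^2)⁻¹ * ∫ x, (F (x-h) + F (x+h) - 2*F x) * φ x := lhs_eq
        _ ≤ (h^2)⁻¹ * ∫ x, ((G x + ε') * h^2) * φ x := by
            apply mul_le_mul_of_nonneg_left hmono
            positivity
        _ = (∫ x, G x * φ x) + ε' * ∫ x, φ x := by
            rw [rhs_eq, ← mul_assoc, inv_mul_cancel₀ (ne_of_gt h2), one_mul, final_eq]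
    exact le_of_tendsto hDCT hineq
  -- conclude
  have hφint0 : 0 ≤ ∫ x, φ x := integral_nonneg hφ0
  apply le_of_forall_pos_le_add
  intro ϵ hϵ
  have h1 : (0:ℝ) < (∫ x, φ x) + 1 := by linarith
  have h2 := hmain (ϵ/((∫ x, φ x)+1)) (by positivity)
  have h3 : (ϵ/((∫ x, φ x)+1)) * (∫ x, φ x) ≤ ϵ := by
    rw [div_mul_eq_mul_div, div_le_iff₀ h1]
    nlinarith
  linarith
end

section
/- Let N ≥ 2 be an integer, let I ⊆ ℝ be an open interval, and let f : I → ℝ be continuous with f(x) > 0 for all x ∈ I. Then the following are equivalent: (i) for every x ∈ I and every C^∞ function φ defined on a neighborhood of x such that φ − f has a local maximum at x, one has φ''(x) · f(x) ≤ −(φ'(x))²/(N−1) (i.e. f satisfies f''·f ≤ −(f')²/(N−1) in the viscosity sense on I); (ii) the function ψ := f^{N/(N−1)} satisfies ψ'' ≤ 0 in the viscosity sense on I, i.e. for every x ∈ I and every C^∞ function φ defined on a neighborhood of x such that φ − ψ has a local maximum at x, one has φ''(x) ≤ 0. -/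
open Filter Set

lemma rpow_smooth (θ : ℝ → ℝ) (V : Set ℝ) (hV : IsOpen V) (hθ : ContDiffOn ℝ (⊤ : ℕ∞) θ V)
    (hpos : ∀ y ∈ V, 0 < θ y) (α : ℝ) :
    ContDiffOn ℝ (⊤ : ℕ∞) (fun y => θ y ^ α) V := fun y hy =>
  (((hθ y hy).contDiffAt (hV.mem_nhds hy)).rpow_const_of_ne (hpos y hy).ne').contDiffWithinAt

lemma rpow_derivs (θ : ℝ → ℝ) (V : Set ℝ) (hV : IsOpen V) (hθ : ContDiffOn ℝ (⊤ : ℕ∞) θ V)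
    (hpos : ∀ y ∈ V, 0 < θ y) (α : ℝ) (x : ℝ) (hx : x ∈ V) :
    deriv (fun y => θ y ^ α) x = deriv θ x * α * θ x ^ (α - 1) ∧
    deriv (deriv (fun y => θ y ^ α)) x =
      deriv (deriv θ) x * α * θ x ^ (α - 1) +
        (deriv θ x) ^ 2 * (α * (α - 1)) * θ x ^ (α - 2) := by
  have hd : ∀ y ∈ V, HasDerivAt θ (deriv θ y) y := fun y hy =>
    (((hθ y hy).contDiffAt (hV.mem_nhds hy)).differentiableAt (by simp)).hasDerivAt
  have h1 : ∀ y ∈ V, HasDerivAt (fun z => θ z ^ α) (deriv θ y * α * θ y ^ (α - 1)) y :=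
    fun y hy => (hd y hy).rpow_const (Or.inl (hpos y hy).ne')
  refine ⟨(h1 x hx).deriv, ?_⟩
  have hEq : deriv (fun z => θ z ^ α) =ᶠ[nhds x] fun y => deriv θ y * α * θ y ^ (α - 1) :=
    eventually_of_mem (hV.mem_nhds hx) fun y hy => (h1 y hy).deriv
  rw [hEq.deriv_eq]
  have hθ' : HasDerivAt (deriv θ) (deriv (deriv θ) x) x :=
    ((((hθ.deriv_of_isOpen hV (m := 1) (by exact WithTop.coe_le_coe.mpr (le_top : ((1 + 1 : ℕ) : ℕ∞) ≤ ⊤))) x hx).contDiffAt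
      (hV.mem_nhds hx)).differentiableAt one_ne_zero).hasDerivAt
  have h2 : HasDerivAt (fun y => θ y ^ (α - 1)) (deriv θ x * (α - 1) * θ x ^ (α - 1 - 1)) x :=
    (hd x hx).rpow_const (Or.inl (hpos x hx).ne')
  have h3 : HasDerivAt (fun y => deriv θ y * α * θ y ^ (α - 1))
      ((deriv (deriv θ) x * α) * θ x ^ (α - 1) +
        (deriv θ x * α) * (deriv θ x * (α - 1) * θ x ^ (α - 1 - 1))) x :=
    (hθ'.mul_const α).mul h2
  rw [h3.deriv, show α - 1 - 1 = α - 2 by ring]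
  ring

theorem stmt_13 (N : ℕ) (hN : 2 ≤ N) (I : Set ℝ) (hIopen : IsOpen I)
    (hIconn : I.OrdConnected) (f : ℝ → ℝ) (hf : ContinuousOn f I)
    (hfpos : ∀ x ∈ I, 0 < f x) :
    -- (i) `f''·f ≤ −(f')²/(N−1)` in the viscosity sense on `I`
    ((∀ x ∈ I, ∀ φ : ℝ → ℝ, ∀ U ∈ nhds x, ContDiffOn ℝ (⊤ : ℕ∞) φ U →
        IsLocalMax (fun y => φ y - f y) x →
        deriv (deriv φ) x * f x ≤ -(deriv φ x) ^ 2 / ((N : ℝ) - 1)) ↔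
    -- (ii) `ψ'' ≤ 0` in the viscosity sense on `I`, where `ψ = f^{N/(N−1)}`
      (∀ x ∈ I, ∀ φ : ℝ → ℝ, ∀ U ∈ nhds x, ContDiffOn ℝ (⊤ : ℕ∞) φ U →
        IsLocalMax (fun y => φ y - f y ^ ((N : ℝ) / ((N : ℝ) - 1))) x →
        deriv (deriv φ) x ≤ 0)) := by
  set α : ℝ := (N : ℝ) / ((N : ℝ) - 1) with hαdef
  have hN1 : (0 : ℝ) < (N : ℝ) - 1 := by
    have : (2 : ℝ) ≤ (N : ℝ) := by exact_mod_cast hN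
    linarith
  have hαpos : 0 < α := div_pos (by linarith) hN1
  have hα1' : α - 1 = 1 / ((N : ℝ) - 1) := by
    rw [hαdef]; field_simp; ring
  constructor
  · -- (i) → (ii)
    intro h x hx φ U hU hsm hmax
    set c : ℝ := φ x - f x ^ α with hc
    set φt : ℝ → ℝ := fun y => φ y - c with hφt
    have hφtx : φt x = f x ^ α := by simp [hφt, hc]
    have hφtxpos : 0 < φt x := hφtx ▸ Real.rpow_pos_of_pos (hfpos x hx) α
    have hS : {y | 0 < φt y ∧ y ∈ interior U ∧ y ∈ I} ∈ nhds x := by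
      have hcont : ContinuousAt φt x := by
        have := (hsm x (mem_of_mem_nhds hU)).contDiffAt hU
        exact (this.continuousAt).sub continuousAt_const
      filter_upwards [hcont.preimage_mem_nhds (Ioi_mem_nhds hφtxpos),
        interior_mem_nhds.mpr hU, hIopen.mem_nhds hx] with y h1 h2 h3
      exact ⟨h1, h2, h3⟩
    obtain ⟨V, hVS, hVopen, hxV⟩ := mem_nhds_iff.mp hS
    have hVpos : ∀ y ∈ V, 0 < φt y := fun y hy => (hVS hy).1
    have hVU : ∀ y ∈ V, y ∈ interior U := fun y hy => (hVS hy).2.1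
    have hVI : ∀ y ∈ V, y ∈ I := fun y hy => (hVS hy).2.2
    have hsmφt : ContDiffOn ℝ (⊤ : ℕ∞) φt V := fun y hy =>
      ((((hsm y (interior_subset (hVU y hy))).contDiffAt
        (mem_interior_iff_mem_nhds.mp (hVU y hy))).sub contDiffAt_const)).contDiffWithinAt
    set θ : ℝ → ℝ := fun y => φt y ^ (α⁻¹) with hθdef
    have hθpos : ∀ y ∈ V, 0 < θ y := fun y hy => by
      simp only [hθdef]; exact Real.rpow_pos_of_pos (hVpos y hy) _
    have hsmθ : ContDiffOn ℝ (⊤ : ℕ∞) θ V := rpow_smooth φt V hVopen hsmφt hVpos α⁻¹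
    have hθval : ∀ y ∈ V, φt y ≤ f y ^ α → θ y ≤ f y := by
      intro y hy hle
      have hfy : 0 ≤ f y := (hfpos y (hVI y hy)).le
      calc θ y ≤ (f y ^ α) ^ (α⁻¹) :=
            Real.rpow_le_rpow (hVpos y hy).le hle (by positivity)
        _ = f y := by
            rw [← Real.rpow_mul hfy, mul_inv_cancel₀ hαpos.ne', Real.rpow_one]
    have hθx : θ x = f x := by
      have hfx : 0 ≤ f x := (hfpos x hx).le
      simp only [hθdef, hφtx]
      rw [← Real.rpow_mul hfx, mul_inv_cancel₀ hαpos.ne', Real.rpow_one]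
    have hmaxθ : IsLocalMax (fun y => θ y - f y) x := by
      have hev : ∀ᶠ y in nhds x, θ y - f y ≤ θ x - f x := by
        filter_upwards [hmax, hVopen.mem_nhds hxV] with y hy1 hy2
        have h1 : φ y - f y ^ α ≤ φ x - f x ^ α := hy1
        have h2 : φt y ≤ f y ^ α := by simp only [hφt, hc]; linarith
        have := hθval y hy2 h2
        rw [hθx]; linarith
      exact hev
    have hkey := h x hx θ V (hVopen.mem_nhds hxV) hsmθ hmaxθ
    have hφeq : φt =ᶠ[nhds x] fun y => θ y ^ α := by
      filter_upwards [hVopen.mem_nhds hxV] with y hy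
      simp only [hθdef]
      rw [← Real.rpow_mul (hVpos y hy).le, inv_mul_cancel₀ hαpos.ne', Real.rpow_one]
    have hd1 : deriv φ = deriv φt := by
      funext y; rw [hφt]; simp [deriv_sub_const]
    have hd2 : deriv (deriv φ) x = deriv (deriv (fun y => θ y ^ α)) x := by
      rw [hd1, hφeq.deriv.deriv_eq]
    obtain ⟨hf1, hf2⟩ := rpow_derivs θ V hVopen hsmθ hθpos α x hxV
    rw [hd2, hf2, hθx]
    set A := deriv θ x
    set T := deriv (deriv θ) x
    set fx := f x
    have hfxpos : 0 < fx := hfpos x hx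
    have hnd : -A ^ 2 / ((N : ℝ) - 1) = -(A ^ 2 / ((N : ℝ) - 1)) := by ring
    have hkey2 : T * fx + A ^ 2 * (α - 1) ≤ 0 := by
      rw [hα1', mul_one_div]
      rw [hnd] at hkey
      linarith
    have hpow : fx ^ (α - 1) = fx ^ (α - 2) * fx := by
      rw [show α - 1 = (α - 2) + 1 by ring, Real.rpow_add_one hfxpos.ne']
    have hp2 : 0 < fx ^ (α - 2) := Real.rpow_pos_of_pos hfxpos _
    calc T * α * fx ^ (α - 1) + A ^ 2 * (α * (α - 1)) * fx ^ (α - 2)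
        = (α * fx ^ (α - 2)) * (T * fx + A ^ 2 * (α - 1)) := by rw [hpow]; ring
      _ ≤ 0 := mul_nonpos_of_nonneg_of_nonpos (by positivity) hkey2
  · -- (ii) → (i)
    intro h x hx θ U hU hsm hmax
    set c : ℝ := θ x - f x with hc
    set θt : ℝ → ℝ := fun y => θ y - c with hθt
    have hθtx : θt x = f x := by simp [hθt, hc]
    have hθtxpos : 0 < θt x := hθtx ▸ hfpos x hx
    have hS : {y | 0 < θt y ∧ y ∈ interior U ∧ y ∈ I} ∈ nhds x := by
      have hcont : ContinuousAt θt x := by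
        have := (hsm x (mem_of_mem_nhds hU)).contDiffAt hU
        exact (this.continuousAt).sub continuousAt_const
      filter_upwards [hcont.preimage_mem_nhds (Ioi_mem_nhds hθtxpos),
        interior_mem_nhds.mpr hU, hIopen.mem_nhds hx] with y h1 h2 h3
      exact ⟨h1, h2, h3⟩
    obtain ⟨V, hVS, hVopen, hxV⟩ := mem_nhds_iff.mp hS
    have hVpos : ∀ y ∈ V, 0 < θt y := fun y hy => (hVS hy).1
    have hVU : ∀ y ∈ V, y ∈ interior U := fun y hy => (hVS hy).2.1
    have hVI : ∀ y ∈ V, y ∈ I := fun y hy => (hVS hy).2.2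
    have hsmθt : ContDiffOn ℝ (⊤ : ℕ∞) θt V := fun y hy =>
      ((((hsm y (interior_subset (hVU y hy))).contDiffAt
        (mem_interior_iff_mem_nhds.mp (hVU y hy))).sub contDiffAt_const)).contDiffWithinAt
    set φ : ℝ → ℝ := fun y => θt y ^ α with hφdef
    have hsmφ : ContDiffOn ℝ (⊤ : ℕ∞) φ V := rpow_smooth θt V hVopen hsmθt hVpos α
    have hφx : φ x = f x ^ α := by simp only [hφdef, hθtx]
    have hmaxφ : IsLocalMax (fun y => φ y - f y ^ α) x := by
      have hev : ∀ᶠ y in nhds x, φ y - f y ^ α ≤ φ x - f x ^ α := by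
        filter_upwards [hmax, hVopen.mem_nhds hxV] with y hy1 hy2
        have h1 : θ y - f y ≤ θ x - f x := hy1
        have hle : θt y ≤ f y := by simp only [hθt, hc]; linarith
        have h2 : φ y ≤ f y ^ α := by
          simp only [hφdef]
          exact Real.rpow_le_rpow (hVpos y hy2).le hle hαpos.le
        rw [hφx]; linarith
      exact hev
    have hkey := h x hx φ V (hVopen.mem_nhds hxV) hsmφ hmaxφ
    obtain ⟨hf1, hf2⟩ := rpow_derivs θt V hVopen hsmθt hVpos α x hxV
    have hdθ : deriv θt = deriv θ := by
      funext y; rw [hθt]; simp [deriv_sub_const]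
    have hkey' : deriv (deriv θ) x * α * f x ^ (α - 1) +
        (deriv θ x) ^ 2 * (α * (α - 1)) * f x ^ (α - 2) ≤ 0 := by
      rw [← hdθ, ← hθtx, ← hf2]
      exact hkey
    set A := deriv θ x
    set T := deriv (deriv θ) x
    set fx := f x
    have hfxpos : 0 < fx := hfpos x hx
    have hpow : fx ^ (α - 1) = fx ^ (α - 2) * fx := by
      rw [show α - 1 = (α - 2) + 1 by ring, Real.rpow_add_one hfxpos.ne']
    have hp2 : 0 < fx ^ (α - 2) := Real.rpow_pos_of_pos hfxpos _
    have hkey2 : T * fx + A ^ 2 * (α - 1) ≤ 0 := by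
      have heq : T * α * fx ^ (α - 1) + A ^ 2 * (α * (α - 1)) * fx ^ (α - 2)
          = (α * fx ^ (α - 2)) * (T * fx + A ^ 2 * (α - 1)) := by rw [hpow]; ring
      rw [heq] at hkey'
      nlinarith [mul_pos hαpos hp2]
    rw [hα1', mul_one_div] at hkey2
    have hnd : -A ^ 2 / ((N : ℝ) - 1) = -(A ^ 2 / ((N : ℝ) - 1)) := by ring
    rw [hnd]
    linarith
end
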